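/- Let p > 1, l,d ∈ ℕ₊, and A₁,…,A_l ∈ ℂ^{d×d}. Let ω = (ω₁,…,ω_l) ∈ (ℝ²)^l with |ω| = 1 and X = (X₁,…,X_l) ∈ (ℝ^{2d})^l. Setting σ_j = e^{-i arg ω_j} V_d^{-1}(X_j) ∈ ℂ^d, one has p^{-1} H^{(A₁,…,A_l)}_{F_p}[ω; X] = Σ_{j=1}^l Re⟨A_j σ_j, σ_j⟩ + (p−2) Σ_{j,k=1}^l |ω_j||ω_k| Re⟨A_j σ_j, Re σ_k⟩. -/

import Mathlib

open scoped ComplexConjugate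

noncomputable def Ip (p : ℝ) {d : ℕ} (ξ : EuclideanSpace ℂ (Fin d)) : EuclideanSpace ℂ (Fin d) :=
  WithLp.toLp 2 (fun i => ξ i + ((1 - 2 / p : ℝ) : ℂ) * conj (ξ i))

noncomputable def mulVecE {d : ℕ} (A : Matrix (Fin d) (Fin d) ℂ)
    (ξ : EuclideanSpace ℂ (Fin d)) : EuclideanSpace ℂ (Fin d) :=
  WithLp.toLp 2 (fun i => ∑ j, A i j * ξ j)

noncomputable def Delta (p : ℝ) {d : ℕ} (A : Matrix (Fin d) (Fin d) ℂ) : ℝ :=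
  sInf { r : ℝ | ∃ ξ : EuclideanSpace ℂ (Fin d), ‖ξ‖ = 1 ∧
    r = (@inner ℂ _ _ (mulVecE A ξ) (Ip p ξ)).re }

/-- The real form `M(A) = [[Re A, −Im A],[Im A, Re A]]` of a complex matrix, as a function on
`(Fin 2 × Fin d) × (Fin 2 × Fin d)`; the first coordinate `0` indexes the "real" block and `1`
the "imaginary" block. -/
noncomputable def realForm {d : ℕ} (A : Matrix (Fin d) (Fin d) ℂ) :
    (Fin 2 × Fin d) → (Fin 2 × Fin d) → ℝ := fun x y =>
  if x.1 = 0 then (if y.1 = 0 then (A x.2 y.2).re else -((A x.2 y.2).im))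
  else (if y.1 = 0 then (A x.2 y.2).im else (A x.2 y.2).re)

/-- Entries of the Hessian matrix `D²Φ(ω)` of a function on a Euclidean space. -/
noncomputable def hessE {ι : Type*} [Fintype ι] [DecidableEq ι]
    (Φ : EuclideanSpace ℝ ι → ℝ) (ω : EuclideanSpace ℝ ι) (i j : ι) : ℝ :=
  iteratedFDeriv ℝ 2 Φ ω ![EuclideanSpace.single i 1, EuclideanSpace.single j 1]

/-- Generalized Hessian quadratic form
`H^{(A₁,…,A_l)}_Φ[ω;X] = ⟨(M(A₁*)⊕⋯⊕M(A_l*))·((D²Φ)(ω)⊗I_{ℝ^d}) X, X⟩`. -/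
noncomputable def genHess {l d : ℕ} (A : Fin l → Matrix (Fin d) (Fin d) ℂ)
    (Φ : EuclideanSpace ℝ (Fin l × Fin 2) → ℝ) (ω : EuclideanSpace ℝ (Fin l × Fin 2))
    (X : Fin l × Fin 2 × Fin d → ℝ) : ℝ :=
  ∑ j, ∑ a, ∑ m, (∑ b, ∑ n, realForm (A j).conjTranspose (a, m) (b, n) *
      (∑ k, ∑ c, hessE Φ ω (j, b) (k, c) * X (k, c, n))) * X (j, a, m)

/-- Generalized Hessian quadratic form for a single matrix (functions on `ℝ²`):
`H^A_Φ[ζ;X] = ⟨M(A*)·((D²Φ)(ζ)⊗I_{ℝ^d}) X, X⟩`. -/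
noncomputable def genHess1 {d : ℕ} (A : Matrix (Fin d) (Fin d) ℂ)
    (Φ : EuclideanSpace ℝ (Fin 2) → ℝ) (ζ : EuclideanSpace ℝ (Fin 2))
    (X : Fin 2 × Fin d → ℝ) : ℝ :=
  ∑ a, ∑ m, (∑ b, ∑ n, realForm A.conjTranspose (a, m) (b, n) *
      (∑ c, hessE Φ ζ b c * X (c, n))) * X (a, m)

/-- The identification `V_d : ℂ^d → ℝ^{2d}`. -/
noncomputable def Vd {d : ℕ} (ξ : EuclideanSpace ℂ (Fin d)) : Fin 2 × Fin d → ℝ :=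
  fun x => if x.1 = 0 then (ξ x.2).re else (ξ x.2).im

/-!
On the unit sphere the Hessian of `|·|^p` is `p (I + (p - 2) ω ωᵀ)`, so the Hessian form splits
into `p Σ_j ⟨M(A_j*) X_j, X_j⟩` and `p (p - 2) Σ_j ⟨M(A_j*) (ω_j ⊗ Y), X_j⟩` with
`Y = Σ_k (ω_{k,0} X_{k,0} + ω_{k,1} X_{k,1}) ∈ ℝ^d`. Through `V_d`, `⟨M(A*) y, x⟩ = Re⟨A ζ_x, ζ_y⟩`.
The rotation `σ_j = e^{-i arg ω_j} ζ_j` is unitary, which gives the first sum, and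
`|ω_j| σ_j = conj(ω_j) ζ_j`, so `Σ_k |ω_k| Re σ_k = Y`, which gives the second.
-/

section NormRpow

open scoped RealInnerProductSpace

variable {E : Type*} [NormedAddCommGroup E] [InnerProductSpace ℝ E]

theorem hasFDerivAt_norm_rpow_of_ne_zero (q : ℝ) {x : E} (hx : x ≠ 0) :
    HasFDerivAt (fun x : E ↦ ‖x‖ ^ q) ((q * ‖x‖ ^ (q - 2)) • innerSL ℝ x) x := by
  convert ((hasStrictFDerivAt_norm_sq x).rpow_const (p := q / 2) (by simp [hx])).hasFDerivAt
    using 1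
  · ext y
    rw [← Real.rpow_natCast_mul (norm_nonneg y)]
    ring_nf
  · rw [← Real.rpow_natCast_mul (norm_nonneg x), ← Nat.cast_smul_eq_nsmul ℝ, smul_smul]
    ring_nf

theorem fderiv_fderiv_norm_rpow_apply {p : ℝ} (hp : 1 < p) {ω : E} (hω : ω ≠ 0) (u v : E) :
    fderiv ℝ (fderiv ℝ (fun x : E ↦ ‖x‖ ^ p)) ω u v =
      p * ‖ω‖ ^ (p - 2) * ⟪u, v⟫ + p * (p - 2) * ‖ω‖ ^ (p - 4) * ⟪ω, u⟫ * ⟪ω, v⟫ := by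
  have hfderiv : fderiv ℝ (fun x : E ↦ ‖x‖ ^ p) = fun x ↦ (p * ‖x‖ ^ (p - 2)) • innerSL ℝ x :=
    funext fun x ↦ fderiv_norm_rpow x hp
  have hcoeff := ((hasFDerivAt_norm_rpow_of_ne_zero (p - 2) hω).const_mul p)
  have hd : HasFDerivAt (fun x : E ↦ (p * ‖x‖ ^ (p - 2)) • innerSL ℝ x) _ ω :=
    hcoeff.smul (innerSL ℝ).hasFDerivAt
  rw [hfderiv, hd.fderiv]
  simp only [add_apply, smul_apply, ContinuousLinearMap.smulRight_apply, innerSL_apply_apply,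
    smul_eq_mul]
  rw [innerSL_apply_apply, show p - 2 - 2 = p - 4 by ring]
  ring

end NormRpow

section Hessian

open scoped RealInnerProductSpace

variable {ι : Type*} [Fintype ι] [DecidableEq ι]

theorem hessE_norm_rpow {p : ℝ} (hp : 1 < p) {ω : EuclideanSpace ℝ ι} (hω : ω ≠ 0) (i j : ι) :
    hessE (fun w ↦ ‖w‖ ^ p) ω i j =
      p * ‖ω‖ ^ (p - 2) * (if i = j then 1 else 0) + p * (p - 2) * ‖ω‖ ^ (p - 4) * ω i * ω j := by
  rw [hessE, iteratedFDeriv_two_apply, Matrix.cons_val_zero, Matrix.cons_val_one,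
    fderiv_fderiv_norm_rpow_apply hp hω]
  simp [EuclideanSpace.inner_single_right, eq_comm]

theorem sum_hessE_norm_rpow_mul {p : ℝ} (hp : 1 < p) {ω : EuclideanSpace ℝ ι} (hω : ‖ω‖ = 1)
    (x : ι → ℝ) (i : ι) :
    ∑ j, hessE (fun w ↦ ‖w‖ ^ p) ω i j * x j = p * (x i + (p - 2) * ω i * ∑ j, ω j * x j) := by
  have hω0 : ω ≠ 0 := by rintro rfl; simp at hω
  have hterm (j : ι) : hessE (fun w ↦ ‖w‖ ^ p) ω i j * x j =
      (if i = j then p * x j else 0) + p * (p - 2) * ω i * (ω j * x j) := by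
    rw [hessE_norm_rpow hp hω0, hω, Real.one_rpow, Real.one_rpow]
    split_ifs <;> ring
  simp only [hterm, Finset.sum_add_distrib, Finset.sum_ite_eq, Finset.mem_univ, if_true,
    ← Finset.mul_sum]
  ring

end Hessian

section ComplexCoordinates

variable {d : ℕ}

noncomputable def VdInv (x : Fin 2 × Fin d → ℝ) : EuclideanSpace ℂ (Fin d) :=
  WithLp.toLp 2 (fun m ↦ (x (0, m) : ℂ) + (x (1, m) : ℂ) * Complex.I)

noncomputable def reVec (σ : EuclideanSpace ℂ (Fin d)) : EuclideanSpace ℂ (Fin d) :=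
  WithLp.toLp 2 (fun m ↦ ((σ m).re : ℂ))

theorem sum_realForm_conjTranspose_mul (A : Matrix (Fin d) (Fin d) ℂ)
    (x y : Fin 2 × Fin d → ℝ) :
    ∑ a, ∑ m, (∑ b, ∑ n, realForm A.conjTranspose (a, m) (b, n) * y (b, n)) * x (a, m) =
      (inner ℂ (mulVecE A (VdInv x)) (VdInv y)).re := by
  simp only [PiLp.inner_apply, RCLike.inner_apply, mulVecE, map_sum, Finset.mul_sum,
    Finset.sum_mul, Complex.re_sum, Fin.sum_univ_two, add_mul, ← Finset.sum_add_distrib]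
  rw [Finset.sum_comm]
  refine Finset.sum_congr rfl fun m _ ↦ Finset.sum_congr rfl fun n _ ↦ ?_
  simp [realForm, VdInv, Complex.mul_re, Complex.mul_im]
  ring

theorem mulVecE_smul (A : Matrix (Fin d) (Fin d) ℂ) (c : ℂ) (ξ : EuclideanSpace ℂ (Fin d)) :
    mulVecE A (c • ξ) = c • mulVecE A ξ := by
  ext i
  simp only [mulVecE, PiLp.smul_apply, smul_eq_mul, Finset.mul_sum]
  exact Finset.sum_congr rfl fun j _ ↦ by ring

theorem inner_mulVecE_smul_smul {c : ℂ} (hc : ‖c‖ = 1) (A : Matrix (Fin d) (Fin d) ℂ)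
    (ξ : EuclideanSpace ℂ (Fin d)) :
    inner ℂ (mulVecE A (c • ξ)) (c • ξ) = inner ℂ (mulVecE A ξ) ξ := by
  rw [mulVecE_smul, inner_smul_left, inner_smul_right, ← mul_assoc, RCLike.conj_mul, hc]
  simp

theorem norm_mul_exp_neg_arg_mul_I (z : ℂ) :
    (‖z‖ : ℂ) * Complex.exp (-(z.arg : ℂ) * Complex.I) = conj z := by
  conv_rhs => rw [← Complex.norm_mul_exp_arg_mul_I z]
  rw [map_mul, Complex.conj_ofReal, ← Complex.exp_conj]
  simp [map_mul, Complex.conj_ofReal, Complex.conj_I]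

theorem norm_mul_re_exp_neg_arg_mul_I_mul (z u : ℂ) :
    ‖z‖ * (Complex.exp (-(z.arg : ℂ) * Complex.I) * u).re = z.re * u.re + z.im * u.im := by
  rw [← Complex.re_ofReal_mul, ← mul_assoc, norm_mul_exp_neg_arg_mul_I]
  simp [Complex.mul_re]

end ComplexCoordinates

section Slices

variable {l d : ℕ}

def slice (X : Fin l × Fin 2 × Fin d → ℝ) (j : Fin l) : Fin 2 × Fin d → ℝ :=
  fun bn ↦ X (j, bn.1, bn.2)

noncomputable def complexCoord (ω : EuclideanSpace ℝ (Fin l × Fin 2)) (j : Fin l) : ℂ :=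
  (ω (j, 0) : ℂ) + (ω (j, 1) : ℂ) * Complex.I

noncomputable def contractSlices (ω : EuclideanSpace ℝ (Fin l × Fin 2))
    (X : Fin l × Fin 2 × Fin d → ℝ) : EuclideanSpace ℂ (Fin d) :=
  WithLp.toLp 2 (fun n ↦ ((∑ k, ∑ c, ω (k, c) * X (k, c, n) : ℝ) : ℂ))

theorem genHess_eq_sum_re_inner (A : Fin l → Matrix (Fin d) (Fin d) ℂ)
    (Φ : EuclideanSpace ℝ (Fin l × Fin 2) → ℝ) (ω : EuclideanSpace ℝ (Fin l × Fin 2))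
    (X : Fin l × Fin 2 × Fin d → ℝ) :
    genHess A Φ ω X = ∑ j, (inner ℂ (mulVecE (A j) (VdInv (slice X j)))
      (VdInv fun bn ↦ ∑ k, ∑ c, hessE Φ ω (j, bn.1) (k, c) * X (k, c, bn.2))).re :=
  Finset.sum_congr rfl fun j _ ↦ sum_realForm_conjTranspose_mul (A j) (slice X j)
    fun bn ↦ ∑ k, ∑ c, hessE Φ ω (j, bn.1) (k, c) * X (k, c, bn.2)

theorem VdInv_sum_hessE_norm_rpow_mul {p : ℝ} (hp : 1 < p)
    {ω : EuclideanSpace ℝ (Fin l × Fin 2)} (hω : ‖ω‖ = 1) (X : Fin l × Fin 2 × Fin d → ℝ)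
    (j : Fin l) :
    (VdInv fun bn ↦ ∑ k, ∑ c, hessE (fun w ↦ ‖w‖ ^ p) ω (j, bn.1) (k, c) * X (k, c, bn.2)) =
      (p : ℂ) • (VdInv (slice X j) + (((p - 2 : ℝ) : ℂ) * complexCoord ω j) • contractSlices ω X) := by
  ext n
  simp only [VdInv, ← Fintype.sum_prod_type', sum_hessE_norm_rpow_mul hp hω]
  simp [slice, complexCoord, contractSlices, Fintype.sum_prod_type]
  ring

theorem sum_norm_mul_re_inner_reVec (A : Matrix (Fin d) (Fin d) ℂ)
    (ω : EuclideanSpace ℝ (Fin l × Fin 2)) (X : Fin l × Fin 2 × Fin d → ℝ)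
    {σ : Fin l → EuclideanSpace ℂ (Fin d)}
    (hσ : ∀ j, σ j = Complex.exp (-((complexCoord ω j).arg : ℂ) * Complex.I) • VdInv (slice X j))
    (j : Fin l) :
    ∑ k, ‖complexCoord ω j‖ * ‖complexCoord ω k‖ * (inner ℂ (mulVecE A (σ j)) (reVec (σ k))).re =
      (inner ℂ (mulVecE A (VdInv (slice X j))) (complexCoord ω j • contractSlices ω X)).re := by
  have hσj : (‖complexCoord ω j‖ : ℂ) • mulVecE A (σ j) =
      conj (complexCoord ω j) • mulVecE A (VdInv (slice X j)) := by
    rw [hσ, mulVecE_smul, smul_smul, norm_mul_exp_neg_arg_mul_I]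
  have hcontract : ∑ k, (‖complexCoord ω k‖ : ℂ) • reVec (σ k) = contractSlices ω X := by
    ext n
    simp only [contractSlices, reVec, WithLp.ofLp_sum, WithLp.ofLp_smul, Finset.sum_apply,
      Pi.smul_apply, smul_eq_mul, Complex.ofReal_sum]
    refine Finset.sum_congr rfl fun k _ ↦ ?_
    rw [← Complex.ofReal_mul, hσ, PiLp.smul_apply, smul_eq_mul, norm_mul_re_exp_neg_arg_mul_I_mul]
    simp [complexCoord, VdInv, slice, Fin.sum_univ_two]
  calc ∑ k, ‖complexCoord ω j‖ * ‖complexCoord ω k‖ * (inner ℂ (mulVecE A (σ j)) (reVec (σ k))).re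
      = (inner ℂ ((‖complexCoord ω j‖ : ℂ) • mulVecE A (σ j))
          (∑ k, (‖complexCoord ω k‖ : ℂ) • reVec (σ k))).re := by
        simp only [inner_sum, inner_smul_left, inner_smul_right, Complex.conj_ofReal,
          Complex.re_sum, Complex.re_ofReal_mul]
        exact Finset.sum_congr rfl fun _ _ ↦ by ring
    _ = _ := by
        rw [hσj, hcontract, inner_smul_left, inner_smul_right, Complex.conj_conj]

end Slices

/-- the formula for `p⁻¹ H^{(A₁,…,A_l)}_{F_p}[ω;X]` with `|ω| = 1`, where
`σ_j = e^{-i arg ω_j} V_d⁻¹(X_j)`. -/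
theorem stmt8 {l d : ℕ} (p : ℝ) (hp : 1 < p) (A : Fin l → Matrix (Fin d) (Fin d) ℂ)
    (ω : EuclideanSpace ℝ (Fin l × Fin 2)) (hω : ‖ω‖ = 1) (X : Fin l × Fin 2 × Fin d → ℝ)
    (σ : Fin l → EuclideanSpace ℂ (Fin d))
    (hσ : ∀ j, σ j =
      Complex.exp (-((((ω (j, 0) : ℂ) + (ω (j, 1) : ℂ) * Complex.I).arg : ℂ)) * Complex.I) •
        (WithLp.toLp 2 (fun m => (X (j, 0, m) : ℂ) + (X (j, 1, m) : ℂ) * Complex.I) :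
          EuclideanSpace ℂ (Fin d))) :
    p⁻¹ * genHess A (fun w => ‖w‖ ^ p) ω X =
      (∑ j, (@inner ℂ _ _ (mulVecE (A j) (σ j)) (σ j)).re) +
        (p - 2) * ∑ j, ∑ k,
          ‖(ω (j, 0) : ℂ) + (ω (j, 1) : ℂ) * Complex.I‖ *
            ‖(ω (k, 0) : ℂ) + (ω (k, 1) : ℂ) * Complex.I‖ *
            (@inner ℂ _ _ (mulVecE (A j) (σ j))
              (WithLp.toLp 2 (fun m => ((σ k m).re : ℂ)) : EuclideanSpace ℂ (Fin d))).re := by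
  have hσ' : ∀ j, σ j = Complex.exp (-((complexCoord ω j).arg : ℂ) * Complex.I) • VdInv (slice X j) :=
    hσ
  have hdiag (j : Fin l) : inner ℂ (mulVecE (A j) (σ j)) (σ j) =
      inner ℂ (mulVecE (A j) (VdInv (slice X j))) (VdInv (slice X j)) := by
    rw [hσ', inner_mulVecE_smul_smul]
    rw [← Complex.ofReal_neg]
    exact Complex.norm_exp_ofReal_mul_I _
  have hcross := fun j ↦ sum_norm_mul_re_inner_reVec (A j) ω X hσ' j
  simp only [complexCoord, reVec] at hcross
  rw [genHess_eq_sum_re_inner]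
  simp only [hcross, hdiag]
  simp only [VdInv_sum_hessE_norm_rpow_mul hp hω, inner_smul_right, inner_add_right, complexCoord,
    mul_assoc, Complex.re_ofReal_mul, Complex.add_re, ← Finset.mul_sum, Finset.sum_add_distrib]
  rw [← mul_assoc, inv_mul_cancel₀ (zero_lt_one.trans hp).ne', one_mul]
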